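/- arXiv:0911.0903 — 4 statements merged into one kernel-verified Lean document; each statement's English description precedes it below -/
import Mathlib

section
/- In a completely distributive lattice L, for any nonempty set A, any nondecreasing functional F: L^A → L, and any f ∈ L^A, the disjunctive and conjunctive polynomial expressions built from F agree: ⋁_{X ⊆ A} (F(I_X) ∧ ⋀_{x∈X} f(x)) = ⋀_{X ⊆ A} (F(I_{A∖X}) ∨ ⋁_{x∈X} f(x)), where I_X denotes the characteristic function of X (value 1 on X, 0 off X). -/
open Classical in
/-- Characteristic function of `X ⊆ A` with values in `L`. -/
noncomputable def indic {A : Type*} (L : Type*) [CompleteLattice L] (X : Set A) : A → L :=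
  fun a => if a ∈ X then ⊤ else ⊥

theorem dnf_eq_cnf_of_nondecreasing {L A : Type*} [CompletelyDistribLattice L] [Nonempty A]
    (F : (A → L) → L) (hF : ∀ f g : A → L, (∀ a, f a ≤ g a) → F f ≤ F g)
    (f : A → L) :
    (⨆ X : Set A, F (indic L X) ⊓ ⨅ x ∈ X, f x)
      = ⨅ X : Set A, F (indic L Xᶜ) ⊔ ⨆ x ∈ X, f x := by
  apply le_antisymm
  · refine iSup_le fun X => le_iInf fun Y => ?_
    by_cases h : (X ∩ Y).Nonempty
    · obtain ⟨x, hxX, hxY⟩ := h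
      exact le_sup_of_le_right
        ((inf_le_right.trans (iInf₂_le x hxX)).trans (le_iSup₂ (f := fun x _ => f x) x hxY))
    · have hsub : X ⊆ Yᶜ := fun x hx hy => h ⟨x, hx, hy⟩
      refine le_sup_of_le_left (inf_le_left.trans (hF _ _ fun a => ?_))
      unfold indic
      by_cases ha : a ∈ X
      · simp [ha, hsub ha]
      · simp [ha]
  · have key : (⨅ X : Set A, F (indic L Xᶜ) ⊔ ⨆ x ∈ X, f x)
        = ⨅ X : Set A, ⨆ j : Option X,
            (Option.elim j (F (indic L Xᶜ)) fun x => f x) := by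
      refine iInf_congr fun X => ?_
      rw [iSup_option]
      congr 1
      exact iSup_subtype'
    rw [key, iInf_iSup_eq]
    refine iSup_le fun g => ?_
    set T : Set A := {x | ∃ (X : Set A) (h : x ∈ X), g X = some ⟨x, h⟩} with hT
    have hg : g Tᶜ = none := by
      cases hc : g Tᶜ with
      | none => rfl
      | some x => exact absurd ⟨Tᶜ, x.2, by simp [hc]⟩ x.2
    refine le_iSup_of_le T (le_inf ?_ ?_)
    · refine (iInf_le _ Tᶜ).trans ?_
      rw [hg]
      simp [compl_compl]
    · refine le_iInf₂ fun x hx => ?_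
      obtain ⟨X, h, hgX⟩ := hx
      refine (iInf_le _ X).trans ?_
      rw [hgX]
      exact le_rfl
end

section
/- If F: L^A → L is a polynomial functional on a completely distributive lattice L, then F admits the disjunctive normal form F(f) = ⋁_{X ⊆ A} (F(I_X) ∧ ⋀_{x∈X} f(x)) for all f ∈ L^A. -/
/-- Polynomial functionals on `L^A`. -/
inductive IsPolyFunc (L : Type*) [CompleteLattice L] (A : Type*) :
    ((A → L) → L) → Prop
  | proj (a : A) : IsPolyFunc L A (fun f => f a)
  | const (c : L) : IsPolyFunc L A (fun _ => c)
  | inf {ι : Type*} (G : ι → (A → L) → L) (h : ∀ i, IsPolyFunc L A (G i)) :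
      IsPolyFunc L A (fun f => ⨅ i, G i f)
  | sup {ι : Type*} (G : ι → (A → L) → L) (h : ∀ i, IsPolyFunc L A (G i)) :
      IsPolyFunc L A (fun f => ⨆ i, G i f)

lemma polyFunc_mono {L A : Type*} [CompleteLattice L] {F : (A → L) → L}
    (hF : IsPolyFunc L A F) {f g : A → L} (hfg : ∀ a, f a ≤ g a) : F f ≤ F g := by
  induction hF with
  | proj a => exact hfg a
  | const c => exact le_rfl
  | inf G h ih => exact iInf_mono fun i => ih i
  | sup G h ih => exact iSup_mono fun i => ih i

lemma polyFunc_inf_const {L A : Type*} [CompletelyDistribLattice L] {F : (A → L) → L}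
    (hF : IsPolyFunc L A F) (f : A → L) (c : L) :
    F f ⊓ c ≤ F (fun a => f a ⊓ c) := by
  induction hF with
  | proj a => exact le_rfl
  | const c' => exact inf_le_left
  | inf G h ih =>
      refine le_iInf fun i => le_trans ?_ (ih i)
      exact inf_le_inf_right c (iInf_le _ i)
  | sup G h ih =>
      simp only
      rw [iSup_inf_eq]
      exact iSup_mono fun i => ih i

theorem polyFunc_dnf {L A : Type*} [CompletelyDistribLattice L] [Nonempty A]
    (F : (A → L) → L) (hF : IsPolyFunc L A F) (f : A → L) :
    F f = ⨆ X : Set A, F (indic L X) ⊓ ⨅ x ∈ X, f x := by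
  apply le_antisymm
  · induction hF with
    | proj a =>
        refine le_trans ?_ (le_iSup _ ({a} : Set A))
        simp [indic]
    | const c =>
        refine le_trans ?_ (le_iSup _ (∅ : Set A))
        simp
    | inf G h ih =>
        simp only
        calc ⨅ i, G i f ≤ ⨅ i, ⨆ X : Set A, G i (indic L X) ⊓ ⨅ x ∈ X, f x :=
              iInf_mono fun i => ih i
          _ = ⨆ φ : _ → Set A, ⨅ i, G i (indic L (φ i)) ⊓ ⨅ x ∈ φ i, f x := iInf_iSup_eq
          _ ≤ _ := by
              refine iSup_le fun φ => le_trans ?_ (le_iSup _ (⋃ i, φ i))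
              refine le_inf ?_ ?_
              · refine le_trans (iInf_mono fun i => inf_le_left) (iInf_mono fun i => ?_)
                refine polyFunc_mono (h i) fun a => ?_
                simp only [indic]
                split_ifs with h1 h2
                · exact le_rfl
                · exact absurd (Set.mem_iUnion_of_mem i h1) h2
                · exact bot_le
                · exact le_rfl
              · refine le_iInf₂ fun x hx => ?_
                obtain ⟨i, hi⟩ := Set.mem_iUnion.mp hx
                exact le_trans (iInf_le _ i) (le_trans inf_le_right (iInf₂_le x hi))
    | sup G h ih =>
        refine iSup_le fun i => le_trans (ih i) (iSup_mono fun X => ?_)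
        exact inf_le_inf_right _ (le_iSup (fun j => G j (indic L X)) i)
  · refine iSup_le fun X => ?_
    refine le_trans (polyFunc_inf_const hF _ _) ?_
    refine polyFunc_mono hF fun a => ?_
    simp only [indic]
    split_ifs with h1
    · exact le_trans inf_le_right (iInf₂_le a h1)
    · simp
end

section
/- If F: L^A → L is a polynomial functional on a completely distributive lattice L, then F admits the conjunctive normal form F(f) = ⋀_{X ⊆ A} (F(I_{A∖X}) ∨ ⋁_{x∈X} f(x)) for all f ∈ L^A. -/
lemma poly_mono {L A : Type*} [CompleteLattice L] {F : (A → L) → L}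
    (hF : IsPolyFunc L A F) : Monotone F := by
  induction hF with
  | proj a => exact fun f g h => h a
  | const c => exact fun f g h => le_rfl
  | inf G h ih => exact fun f g h' => iInf_mono fun i => ih i h'
  | sup G h ih => exact fun f g h' => iSup_mono fun i => ih i h'

lemma poly_sup_le {L A : Type*} [CompletelyDistribLattice L] {F : (A → L) → L}
    (hF : IsPolyFunc L A F) (g : A → L) (c : L) :
    F (fun a => g a ⊔ c) ≤ F g ⊔ c := by
  induction hF with
  | proj a => exact le_rfl
  | const d => exact le_sup_left
  | inf G h ih =>
      refine le_trans (iInf_mono fun i => ih i) ?_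
      rw [iInf_sup_eq]
  | sup G h ih =>
      exact iSup_le fun i => le_trans (ih i) (sup_le_sup_right (le_iSup (fun j => G j g) i) c)

lemma poly_inf_le {L A : Type*} [CompletelyDistribLattice L] {F : (A → L) → L}
    (hF : IsPolyFunc L A F) (g : A → L) (c : L) :
    F g ⊓ c ≤ F (fun a => g a ⊓ c) := by
  induction hF with
  | proj a => exact le_rfl
  | const d => exact inf_le_left
  | sup G h ih =>
      refine le_trans ?_ (iSup_mono fun i => ih i)
      rw [iSup_inf_eq]
  | inf G h ih =>
      exact le_iInf fun i => le_trans (inf_le_inf_right c (iInf_le _ i)) (ih i)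

theorem polyFunc_cnf {L A : Type*} [CompletelyDistribLattice L] [Nonempty A]
    (F : (A → L) → L) (hF : IsPolyFunc L A F) (f : A → L) :
    F f = ⨅ X : Set A, F (indic L Xᶜ) ⊔ ⨆ x ∈ X, f x := by
  classical
  have mono := poly_mono hF
  apply le_antisymm
  · -- F f ≤ CNF
    refine le_iInf fun X => ?_
    have h1 : f ≤ fun a => indic L Xᶜ a ⊔ ⨆ x ∈ X, f x := by
      intro a
      by_cases ha : a ∈ X
      · exact le_sup_of_le_right (le_biSup f ha)
      · simp [indic, ha]
    exact (mono h1).trans (poly_sup_le hF _ _)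
  · -- CNF ≤ DNF ≤ F f
    have hDNF : (⨆ Y : Set A, F (indic L Y) ⊓ ⨅ y ∈ Y, f y) ≤ F f := by
      refine iSup_le fun Y => ?_
      refine le_trans (poly_inf_le hF _ _) (mono ?_)
      intro a
      by_cases ha : a ∈ Y
      · simpa [indic, ha] using biInf_le f ha
      · simp [indic, ha]
    refine le_trans ?_ hDNF
    -- CNF ≤ DNF via complete distributivity
    have key : (⨅ X : Set A, F (indic L Xᶜ) ⊔ ⨆ x ∈ X, f x)
        = ⨅ X : Set A, ⨆ t : Option X, t.elim (F (indic L Xᶜ)) (fun x => f x) := by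
      refine iInf_congr fun X => ?_
      rw [iSup_option, iSup_subtype']
      rfl
    rw [key, iInf_iSup_eq]
    refine iSup_le fun φ => ?_
    set Y : Set A := {a : A | ∃ X : Set A, ∃ h : a ∈ X, φ X = some ⟨a, h⟩} with hY
    have hφY : φ Yᶜ = none := by
      rcases h : φ Yᶜ with _ | ⟨a, ha⟩
      · rfl
      · exact absurd ⟨Yᶜ, ha, h⟩ ha
    refine le_trans ?_ (le_iSup _ Y)
    refine le_inf ?_ ?_
    · refine le_trans (iInf_le _ Yᶜ) ?_
      rw [hφY]
      simp
    · refine le_iInf₂ fun y hy => ?_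
      obtain ⟨X, h, hφ⟩ := hy
      refine le_trans (iInf_le _ X) ?_
      rw [hφ]
      exact le_rfl
end

section
/- Let L be a completely distributive lattice, A a nonempty set, and F: L^A → L a nondecreasing functional with F(I_X) ∈ {0,1} for every X ⊆ A, such that for every f ∈ L^A, F(f) lies between P(f) and Q(f), where P(f) = ⋁_{X ∈ 𝒜} ⋀_{x∈X} f(x) with 𝒜 = {X : F(I_X) = 1} and Q(f) = ⋀_{X ∈ ℬ} ⋁_{x∈X} f(x) with ℬ = {X : F(I_{A∖X}) = 0}. Then F(f) = P(f) = Q(f) for all f. -/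
theorem term_sandwich_eq {L A : Type*} [CompletelyDistribLattice L] [Nonempty A]
    (F : (A → L) → L)
    (h01 : ∀ X : Set A, F (indic L X) = ⊥ ∨ F (indic L X) = ⊤)
    (hF : ∀ f g : A → L, (∀ a, f a ≤ g a) → F f ≤ F g)
    (hlow : ∀ f : A → L,
      (⨆ X ∈ {X : Set A | F (indic L X) = ⊤}, ⨅ x ∈ X, f x) ≤ F f)
    (hup : ∀ f : A → L,
      F f ≤ ⨅ X ∈ {X : Set A | F (indic L Xᶜ) = ⊥}, ⨆ x ∈ X, f x) :
    ∀ f : A → L,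
      F f = (⨆ X ∈ {X : Set A | F (indic L X) = ⊤}, ⨅ x ∈ X, f x) ∧
      F f = ⨅ X ∈ {X : Set A | F (indic L Xᶜ) = ⊥}, ⨆ x ∈ X, f x := by
  intro f
  set S : Set (Set A) := {X : Set A | F (indic L X) = ⊤} with hS
  set T : Set (Set A) := {X : Set A | F (indic L Xᶜ) = ⊥} with hT
  have hQP : (⨅ X ∈ T, ⨆ x ∈ X, f x) ≤ ⨆ X ∈ S, ⨅ x ∈ X, f x := by
    have hQ : (⨅ X ∈ T, ⨆ x ∈ X, f x)
        = ⨅ X : T, ⨆ x : X.1, f x := by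
      rw [iInf_subtype]
      exact iInf_congr fun X => iInf_congr fun hX => by rw [iSup_subtype]
    rw [hQ, iInf_iSup_eq]
    refine iSup_le fun g => ?_
    set Y : Set A := Set.range (fun X : T => (g X : A)) with hY
    have hYS : Y ∈ S := by
      rcases h01 Y with hbot | htop
      · exfalso
        have hYc : Yᶜ ∈ T := by
          simp only [hT, Set.mem_setOf_eq, compl_compl]
          exact hbot
        have := (g ⟨Yᶜ, hYc⟩).2
        exact this ⟨⟨Yᶜ, hYc⟩, rfl⟩
      · exact htop
    have h1 : (⨅ X : T, f (g X)) ≤ ⨅ x ∈ Y, f x := by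
      refine le_iInf₂ fun x hx => ?_
      obtain ⟨X, rfl⟩ := hx
      exact iInf_le _ X
    exact h1.trans (le_iSup₂_of_le Y hYS le_rfl)
  have h1 : F f ≤ ⨆ X ∈ S, ⨅ x ∈ X, f x := (hup f).trans hQP
  have h2 : (⨅ X ∈ T, ⨆ x ∈ X, f x) ≤ F f := hQP.trans (hlow f)
  exact ⟨le_antisymm h1 (hlow f), le_antisymm (hup f) h2⟩
end
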